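/- Let d, γ̄ > 0 and let (γ, X) be random variables with γ positive integrable, X positive integrable, γ independent of X with E[γ] = γ̄, and suppose E[ln((1+γX)/(1+d))] = 0 with 1+γX nondegenerate. Then E[X] > d/γ̄. -/

import Mathlib

/-!
At stationarity `E[log(1 + γX)] = log(1 + d)`. Since `1 + γX` is not a.s. constant, strict Jensen
for the concave logarithm gives `log(1 + d) < log E[1 + γX]`, and by independence
`E[1 + γX] = 1 + γ̄ E[X]`; hence `d < γ̄ E[X]`.
-/

open MeasureTheory ProbabilityTheory Real

theorem log_lt_log_add_div_sub_one {y m : ℝ} (hy : 0 < y) (hm : 0 < m) (hne : y ≠ m) :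
    log y < log m + y / m - 1 := by
  have h := log_lt_sub_one_of_pos (div_pos hy hm) (by rwa [ne_eq, div_eq_one_iff_eq hm.ne'])
  rw [log_div hy.ne' hm.ne'] at h
  linarith

theorem log_le_log_add_div_sub_one {y m : ℝ} (hy : 0 < y) (hm : 0 < m) :
    log y ≤ log m + y / m - 1 := by
  rcases eq_or_ne y m with rfl | hne
  · simp [hm.ne']
  · exact (log_lt_log_add_div_sub_one hy hm hne).le

theorem exp_integral_log_lt_integral {α : Type*} [MeasurableSpace α] {μ : Measure α}
    [IsProbabilityMeasure μ] {f : α → ℝ} (hf_pos : ∀ᵐ x ∂μ, 0 < f x) (hf : Integrable f μ)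
    (hlog : Integrable (fun x ↦ log (f x)) μ) (hnc : ¬ ∃ c, f =ᵐ[μ] fun _ ↦ c) :
    exp (∫ x, log (f x) ∂μ) < ∫ x, f x ∂μ := by
  set m := ∫ x, f x ∂μ
  have hf_nonneg : 0 ≤ᵐ[μ] f := hf_pos.mono fun _ hx ↦ hx.le
  have hm : 0 < m := (integral_nonneg_of_ae hf_nonneg).lt_of_ne fun h ↦
    hnc ⟨0, (integral_eq_zero_iff_of_nonneg_ae hf_nonneg hf).1 h.symm⟩
  -- strict Jensen via the tangent line of `log` at the mean `m`
  set tangent : α → ℝ := fun x ↦ log m + f x / m - 1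
  have htangent_int : Integrable tangent μ :=
    ((integrable_const _).add (hf.div_const m)).sub (integrable_const 1)
  have htangent_integral : ∫ x, tangent x ∂μ = log m := by
    simp only [tangent]
    rw [integral_sub (by exact (integrable_const _).add (hf.div_const m)) (integrable_const 1),
      integral_add (integrable_const _) (hf.div_const m), integral_div]
    simp only [integral_const, probReal_univ, one_smul]
    rw [div_self hm.ne']
    ring
  have hle : (fun x ↦ log (f x)) ≤ᵐ[μ] tangent :=
    hf_pos.mono fun x hx ↦ log_le_log_add_div_sub_one hx hm
  rw [← exp_log hm, exp_lt_exp, ← htangent_integral]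
  refine (integral_mono_ae hlog htangent_int hle).lt_of_ne fun heq ↦ hnc ⟨m, ?_⟩
  filter_upwards [(integral_eq_iff_of_ae_le hlog htangent_int hle).1 heq, hf_pos] with x hx hpos
  by_contra hne
  exact (log_lt_log_add_div_sub_one hpos hm hne).ne hx

theorem predator_prey_noise_increases_prey
    {Ω : Type*} [MeasureSpace Ω] [IsProbabilityMeasure (ℙ : Measure Ω)]
    (d γbar : ℝ) (hd : 0 < d) (hγbar : 0 < γbar)
    (γ X : Ω → ℝ)
    (hγ_pos : ∀ᵐ ω ∂ℙ, 0 < γ ω) (hX_pos : ∀ᵐ ω ∂ℙ, 0 < X ω)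
    (hγ_int : Integrable γ) (hX_int : Integrable X)
    (hindep : IndepFun γ X)
    (hEγ : (∫ ω, γ ω) = γbar)
    (hnondeg : ¬ ∃ b : ℝ, (fun ω => 1 + γ ω * X ω) =ᵐ[ℙ] fun _ => b)
    (hlog_int : Integrable (fun ω => Real.log ((1 + γ ω * X ω) / (1 + d))))
    (hstat : ∫ ω, Real.log ((1 + γ ω * X ω) / (1 + d)) = 0) :
    d / γbar < ∫ ω, X ω := by
  set f : Ω → ℝ := fun ω => 1 + γ ω * X ω
  have hγX_int : Integrable (γ * X) := hindep.integrable_mul hγ_int hX_int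
  have hf_int : Integrable f := (integrable_const 1).add hγX_int
  have hf_pos : ∀ᵐ ω ∂ℙ, 0 < f ω := by
    filter_upwards [hγ_pos, hX_pos] with ω hγω hXω
    positivity
  have hd_pos : 0 < 1 + d := by linarith
  have hlog_div : (fun ω => log (f ω / (1 + d))) =ᵐ[ℙ] fun ω => log (f ω) - log (1 + d) := by
    filter_upwards [hf_pos] with ω hω using log_div hω.ne' hd_pos.ne'
  have hlogf_int : Integrable fun ω => log (f ω) := by
    simpa only [sub_eq_add_neg, integrable_add_const_iff] using hlog_int.congr hlog_div
  have hElogf : ∫ ω, log (f ω) = log (1 + d) := by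
    rwa [integral_congr_ae hlog_div, integral_sub hlogf_int (integrable_const _), integral_const,
      probReal_univ, one_smul, sub_eq_zero] at hstat
  have hEf : ∫ ω, f ω = 1 + γbar * ∫ ω, X ω := by
    change ∫ ω, (1 + (γ * X) ω) = _
    rw [integral_add (integrable_const 1) hγX_int,
      hindep.integral_mul_eq_mul_integral hγ_int.1 hX_int.1, hEγ]
    simp
  have hjensen := exp_integral_log_lt_integral hf_pos hf_int hlogf_int hnondeg
  rw [hElogf, exp_log hd_pos, hEf] at hjensen
  rw [div_lt_iff₀ hγbar]
  linarith
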